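/- arXiv:2405.10923 — 6 statements merged into one kernel-verified Lean document; each statement's English description precedes it below -/
import Mathlib

section
/- Let Θ ∈ ℝ^{ℓ×n} and z ∈ ℝ^n with Θz ≠ 0. For every x ∈ ℝ^n, Θ · P(z,Θ) · x = P(Θz) · (Θx), where P(Θz) = I_ℓ − (2/‖Θz‖²)(Θz)(Θz)ᵀ is the standard Householder reflector of ℝ^ℓ associated with Θz. In other words, sketching intertwines the randomized Householder reflector with the classical Householder reflector of the sketch. -/
open Matrix

/-- The randomized Householder reflector `P(z, Θ) = I - (2/‖Θz‖²) z (Θz)ᵀ Θ`. -/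
noncomputable def rhouse {l n : ℕ} (Θ : Matrix (Fin l) (Fin n) ℝ) (z : Fin n → ℝ) :
    Matrix (Fin n) (Fin n) ℝ :=
  1 - (2 / ((Θ.mulVec z) ⬝ᵥ (Θ.mulVec z))) • (Matrix.vecMulVec z (Θ.mulVec z) * Θ)

/-- The classical Householder reflector `P(v) = I - (2/‖v‖²) v vᵀ`. -/
noncomputable def house {l : ℕ} (v : Fin l → ℝ) : Matrix (Fin l) (Fin l) ℝ :=
  1 - (2 / (v ⬝ᵥ v)) • Matrix.vecMulVec v v

lemma mul_vecMulVec_key {l n : ℕ} (Θ : Matrix (Fin l) (Fin n) ℝ) (z : Fin n → ℝ) :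
    Θ * Matrix.vecMulVec z (Θ.mulVec z) = Matrix.vecMulVec (Θ.mulVec z) (Θ.mulVec z) := by
  ext i j
  simp [mul_apply, vecMulVec_apply, mulVec, dotProduct, Finset.sum_mul, mul_assoc]

/-- sketching intertwines the randomized Householder reflector with the
classical Householder reflector of the sketch: `Θ · P(z,Θ) · x = P(Θz) · (Θx)`. -/
theorem rhouse_sketch_commute {l n : ℕ} (Θ : Matrix (Fin l) (Fin n) ℝ) (z : Fin n → ℝ)
    (hz : Θ.mulVec z ≠ 0) :
    ∀ x : Fin n → ℝ,
      Θ.mulVec ((rhouse Θ z).mulVec x) = (house (Θ.mulVec z)).mulVec (Θ.mulVec x) := by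
  intro x
  rw [mulVec_mulVec, mulVec_mulVec]
  congr 1
  rw [rhouse, house, Matrix.mul_sub, Matrix.sub_mul, Matrix.mul_one, Matrix.one_mul,
    Matrix.mul_smul, Matrix.smul_mul, ← Matrix.mul_assoc, mul_vecMulVec_key]
end

section
/- Let Θ ∈ ℝ^{ℓ×n} and z ∈ ℝ^n with Θz ≠ 0, and define P(z,Θ) = I_n − (2/‖Θz‖²) z (Θz)ᵀ Θ. Then for all x ∈ ℝ^n, ‖Θ · P(z,Θ) · x‖₂ = ‖Θx‖₂, i.e., P(z,Θ) is an isometry with respect to the sketched (semi-)norm x ↦ ‖Θx‖. -/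
open Matrix

/-- Euclidean norm of a finitely supported real vector. -/
noncomputable def eucNorm {k : Type*} [Fintype k] (v : k → ℝ) : ℝ := Real.sqrt (v ⬝ᵥ v)

/-! `Θ P(z, Θ) x` is the ordinary Householder reflection `u ↦ u - (2 ⟪w, u⟫ / ⟪w, w⟫) w` of
`u = Θx` along `w = Θz`, and such a reflection preserves `⟪u, u⟫`. -/

theorem dotProduct_self_sub_reflect {K ι : Type*} [Field K] [Fintype ι] (u w : ι → K)
    (hw : w ⬝ᵥ w ≠ 0) :
    (u - (2 / (w ⬝ᵥ w) * (w ⬝ᵥ u)) • w) ⬝ᵥ (u - (2 / (w ⬝ᵥ w) * (w ⬝ᵥ u)) • w) = u ⬝ᵥ u := by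
  simp only [sub_dotProduct, dotProduct_sub, smul_dotProduct, dotProduct_smul, smul_eq_mul,
    dotProduct_comm u w]
  field_simp
  ring

theorem mulVec_rhouse_mulVec {l n : ℕ} (Θ : Matrix (Fin l) (Fin n) ℝ) (z x : Fin n → ℝ) :
    Θ *ᵥ (rhouse Θ z *ᵥ x) =
      Θ *ᵥ x - (2 / (Θ *ᵥ z ⬝ᵥ Θ *ᵥ z) * (Θ *ᵥ z ⬝ᵥ Θ *ᵥ x)) • (Θ *ᵥ z) := by
  rw [rhouse, sub_mulVec, one_mulVec, smul_mulVec, ← mulVec_mulVec, vecMulVec_mulVec,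
    op_smul_eq_smul, mulVec_sub, mulVec_smul, mulVec_smul, smul_smul]

/-- `P(z,Θ)` is a sketch-isometry: `‖Θ P(z,Θ) x‖₂ = ‖Θ x‖₂` for all `x`. -/
theorem rhouse_sketch_isometric {l n : ℕ} (Θ : Matrix (Fin l) (Fin n) ℝ) (z : Fin n → ℝ)
    (hz : Θ.mulVec z ≠ 0) :
    ∀ x : Fin n → ℝ, eucNorm (Θ.mulVec ((rhouse Θ z).mulVec x)) = eucNorm (Θ.mulVec x) := by
  intro x
  have hw : Θ *ᵥ z ⬝ᵥ Θ *ᵥ z ≠ 0 := dotProduct_self_eq_zero.not.mpr hz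
  rw [eucNorm, eucNorm, mulVec_rhouse_mulVec, dotProduct_self_sub_reflect _ _ hw]
end

section
/- Let Θ ∈ ℝ^{ℓ×n} and u₁,…,u_m ∈ ℝ^n with Θu_j ≠ 0 for all j. Set β_j = 2/‖Θu_j‖², U = [u₁ | ⋯ | u_m], and define upper-triangular matrices T_j recursively by T₁ = [β₁] and T_{j+1} = [[T_j, −β_{j+1} T_j (ΘU_j)ᵀ Θu_{j+1}], [0, β_{j+1}]]. Then with T = T_m, the compositions of randomized Householder reflectors satisfy P(u₁,Θ)⋯P(u_m,Θ) = I_n − U T (ΘU)ᵀ Θ and P(u_m,Θ)⋯P(u₁,Θ) = I_n − U Tᵀ (ΘU)ᵀ Θ. -/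
/-!
Multiplying `I - U T (ΘU)ᵀ Θ` on the right by `I - C B (ΘC)ᵀ Θ` gives
`I - [U C] [[T, -T (ΘU)ᵀ (ΘC) B], [0, B]] (Θ[U C])ᵀ Θ`: the cross term contains
`(ΘU)ᵀ Θ C = (ΘU)ᵀ (ΘC)` and is absorbed into the off-diagonal block. With `C = u_{j+1}` and
`B = [β_{j+1}]` this is exactly the recursion defining `T_{j+1}`, so the first identity follows by
induction on `m`. Multiplying on the left instead puts the cross term in the lower block of the
transposed factor, which gives the second identity.
-/

open Matrix

/-- The matrix `U_j = [u₁ | ⋯ | u_j]` whose columns are the (first `j`) Householder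
vectors. -/
def Umat {n : ℕ} (u : ℕ → Fin n → ℝ) (j : ℕ) : Matrix (Fin n) (Fin j) ℝ :=
  Matrix.of fun i a => u a i

/-- The upper-triangular compact-form factor `T_j`, defined recursively by `T₁ = [β₁]`,
`T_{j+1} = [[T_j, -β_{j+1} T_j (ΘU_j)ᵀ Θu_{j+1}], [0, β_{j+1}]]`, with
`β_j = 2/‖Θu_j‖²` (indices are zero-based here). -/
noncomputable def Tmat {l n : ℕ} (Θ : Matrix (Fin l) (Fin n) ℝ) (u : ℕ → Fin n → ℝ) :
    (j : ℕ) → Matrix (Fin j) (Fin j) ℝ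
  | 0 => 0
  | j + 1 =>
    Matrix.reindex finSumFinEquiv finSumFinEquiv
      (Matrix.fromBlocks (Tmat Θ u j)
        (Matrix.of fun i (_ : Fin 1) =>
          ((-(2 / ((Θ.mulVec (u j)) ⬝ᵥ (Θ.mulVec (u j))))) •
              ((Tmat Θ u j).mulVec fun a : Fin j =>
                (Θ.mulVec (u a)) ⬝ᵥ (Θ.mulVec (u j)))) i)
        0
        (Matrix.of fun _ _ => 2 / ((Θ.mulVec (u j)) ⬝ᵥ (Θ.mulVec (u j)))))

section BlockProducts

variable {R n m o : Type*} [Ring R] [Fintype n] [DecidableEq n] [Fintype m] [Fintype o]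

theorem one_sub_mul_mul_one_sub_eq_fromBlocks (X : Matrix n m R) (S : Matrix m m R)
    (Y : Matrix m n R) (X' : Matrix n o R) (S' : Matrix o o R) (Y' : Matrix o n R) :
    (1 - X * S * Y) * (1 - X' * S' * Y') =
      1 - fromCols X X' * fromBlocks S (-(S * Y * X' * S')) 0 S' * fromRows Y Y' := by
  simp only [fromCols_mul_fromBlocks, fromCols_mul_fromRows, Matrix.mul_zero, add_zero,
    Matrix.mul_neg, Matrix.add_mul, Matrix.neg_mul, Matrix.sub_mul, Matrix.mul_sub,
    Matrix.one_mul, Matrix.mul_one, Matrix.mul_assoc]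
  abel

theorem one_sub_mul_mul_one_sub_eq_fromBlocks_rev (X : Matrix n m R) (S : Matrix m m R)
    (Y : Matrix m n R) (X' : Matrix n o R) (S' : Matrix o o R) (Y' : Matrix o n R) :
    (1 - X' * S' * Y') * (1 - X * S * Y) =
      1 - fromCols X X' * fromBlocks S 0 (-(S' * Y' * X * S)) S' * fromRows Y Y' := by
  simp only [fromCols_mul_fromBlocks, fromCols_mul_fromRows, Matrix.mul_zero, zero_add,
    Matrix.mul_neg, Matrix.add_mul, Matrix.neg_mul, Matrix.sub_mul, Matrix.mul_sub,
    Matrix.one_mul, Matrix.mul_one, Matrix.mul_assoc]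
  abel

end BlockProducts

section CompactWY

variable {R l n m o : Type*} [CommRing R] [Fintype n] (Θ : Matrix l n R)

theorem submatrix_mul_submatrix_mul_transpose {m' : Type*} [Fintype m] [Fintype m']
    (U : Matrix n m R) (T : Matrix m m R) (e : m' ≃ m) :
    U.submatrix id e * T.submatrix e e * (Θ * U.submatrix id e)ᵀ = U * T * (Θ * U)ᵀ := by
  have hΘU : Θ * U.submatrix id e = (Θ * U).submatrix id e := by
    rw [submatrix_mul Θ U id id e Function.bijective_id, submatrix_id_id]
  rw [hΘU, submatrix_mul_equiv, transpose_submatrix, submatrix_mul_equiv, submatrix_id_id]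

variable [Fintype l]

theorem fromRows_transpose_mul (U : Matrix n m R) (C : Matrix n o R) :
    fromRows ((Θ * U)ᵀ * Θ) ((Θ * C)ᵀ * Θ) = (Θ * fromCols U C)ᵀ * Θ := by
  rw [mul_fromCols, transpose_fromCols, fromRows_mul]

variable [DecidableEq n] [Fintype m] [Fintype o]

theorem compactWY_mul (U : Matrix n m R) (T : Matrix m m R) (C : Matrix n o R)
    (B : Matrix o o R) :
    (1 - U * T * (Θ * U)ᵀ * Θ) * (1 - C * B * (Θ * C)ᵀ * Θ) =
      1 - fromCols U C * fromBlocks T (-(T * (Θ * U)ᵀ * (Θ * C) * B)) 0 B *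
        (Θ * fromCols U C)ᵀ * Θ := by
  simp only [Matrix.mul_assoc (_ * _) _ Θ]
  rw [one_sub_mul_mul_one_sub_eq_fromBlocks, fromRows_transpose_mul]
  simp only [Matrix.mul_assoc]

theorem compactWY_transpose_mul (U : Matrix n m R) (T : Matrix m m R) (C : Matrix n o R)
    (B : Matrix o o R) :
    (1 - C * Bᵀ * (Θ * C)ᵀ * Θ) * (1 - U * Tᵀ * (Θ * U)ᵀ * Θ) =
      1 - fromCols U C * (fromBlocks T (-(T * (Θ * U)ᵀ * (Θ * C) * B)) 0 B)ᵀ *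
        (Θ * fromCols U C)ᵀ * Θ := by
  simp only [Matrix.mul_assoc (_ * _) _ Θ]
  rw [one_sub_mul_mul_one_sub_eq_fromBlocks_rev, fromRows_transpose_mul, fromBlocks_transpose]
  simp only [transpose_zero, transpose_neg, transpose_mul, transpose_transpose, Matrix.mul_assoc]

end CompactWY

section Householder

variable {l n : ℕ} (Θ : Matrix (Fin l) (Fin n) ℝ) (u : ℕ → Fin n → ℝ)

theorem rhouse_eq_compactWY (z : Fin n → ℝ) :
    rhouse Θ z = 1 - replicateCol (Fin 1) z *
      ((2 / ((Θ.mulVec z) ⬝ᵥ (Θ.mulVec z))) • (1 : Matrix (Fin 1) (Fin 1) ℝ)) *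
        (Θ * replicateCol (Fin 1) z)ᵀ * Θ := by
  rw [rhouse, vecMulVec_eq (Fin 1), ← replicateCol_mulVec, transpose_replicateCol,
    Matrix.mul_smul, Matrix.mul_one, Matrix.smul_mul, Matrix.smul_mul]
  rfl

theorem Umat_succ (m : ℕ) :
    Umat u (m + 1) =
      (fromCols (Umat u m) (replicateCol (Fin 1) (u m))).submatrix id finSumFinEquiv.symm := by
  ext i a
  obtain ⟨a | a, rfl⟩ := finSumFinEquiv.surjective a <;> simp [Umat]

theorem replicateCol_dotProduct_eq (m : ℕ) :
    replicateCol (Fin 1) (fun a : Fin m => (Θ.mulVec (u a)) ⬝ᵥ (Θ.mulVec (u m))) =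
      (Θ * Umat u m)ᵀ * (Θ * replicateCol (Fin 1) (u m)) := by
  rw [← replicateCol_mulVec, ← replicateCol_mulVec]
  rfl

theorem Tmat_succ (m : ℕ) :
    Tmat Θ u (m + 1) =
      (fromBlocks (Tmat Θ u m)
        (-(Tmat Θ u m * (Θ * Umat u m)ᵀ * (Θ * replicateCol (Fin 1) (u m)) *
          ((2 / ((Θ.mulVec (u m)) ⬝ᵥ (Θ.mulVec (u m)))) • (1 : Matrix (Fin 1) (Fin 1) ℝ))))
        0 ((2 / ((Θ.mulVec (u m)) ⬝ᵥ (Θ.mulVec (u m)))) • 1)).submatrix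
          finSumFinEquiv.symm finSumFinEquiv.symm := by
  rw [Tmat, reindex_apply]
  congr 2
  · change replicateCol (Fin 1) _ = _
    rw [replicateCol_smul, replicateCol_mulVec, replicateCol_dotProduct_eq, Matrix.mul_smul,
      Matrix.mul_one, neg_smul, Matrix.mul_assoc]
  · ext i j
    simp [Subsingleton.elim i j]

theorem compactWY_Umat_Tmat_succ (m : ℕ) :
    1 - Umat u (m + 1) * Tmat Θ u (m + 1) * (Θ * Umat u (m + 1))ᵀ * Θ =
      (1 - Umat u m * Tmat Θ u m * (Θ * Umat u m)ᵀ * Θ) * rhouse Θ (u m) := by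
  rw [rhouse_eq_compactWY, compactWY_mul, Umat_succ, Tmat_succ,
    submatrix_mul_submatrix_mul_transpose]

theorem compactWY_Umat_Tmat_transpose_succ (m : ℕ) :
    1 - Umat u (m + 1) * (Tmat Θ u (m + 1))ᵀ * (Θ * Umat u (m + 1))ᵀ * Θ =
      rhouse Θ (u m) * (1 - Umat u m * (Tmat Θ u m)ᵀ * (Θ * Umat u m)ᵀ * Θ) := by
  have hβ : ((2 / ((Θ.mulVec (u m)) ⬝ᵥ (Θ.mulVec (u m)))) • (1 : Matrix (Fin 1) (Fin 1) ℝ))ᵀ =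
      (2 / ((Θ.mulVec (u m)) ⬝ᵥ (Θ.mulVec (u m)))) • 1 := by
    rw [transpose_smul, transpose_one]
  rw [rhouse_eq_compactWY, ← hβ, compactWY_transpose_mul, Umat_succ, Tmat_succ,
    transpose_submatrix, submatrix_mul_submatrix_mul_transpose]

theorem prod_rhouse_eq_compactWY (m : ℕ) :
    ((List.range m).map fun j => rhouse Θ (u j)).prod =
      1 - Umat u m * Tmat Θ u m * (Θ * Umat u m)ᵀ * Θ := by
  induction m with
  | zero => simp [Tmat]
  | succ m ih =>
    rw [compactWY_Umat_Tmat_succ, ← ih, List.range_succ, List.map_append, List.prod_append,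
      List.map_singleton, List.prod_singleton]

theorem prod_reverse_rhouse_eq_compactWY (m : ℕ) :
    ((List.range m).map fun j => rhouse Θ (u j)).reverse.prod =
      1 - Umat u m * (Tmat Θ u m)ᵀ * (Θ * Umat u m)ᵀ * Θ := by
  induction m with
  | zero => simp [Tmat]
  | succ m ih =>
    rw [compactWY_Umat_Tmat_transpose_succ, ← ih, List.range_succ, List.map_append,
      List.reverse_append, List.map_singleton, List.reverse_singleton, List.singleton_append,
      List.prod_cons]

end Householder

theorem rhouse_compact_general {l n : ℕ} (m : ℕ) (Θ : Matrix (Fin l) (Fin n) ℝ)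
    (u : ℕ → Fin n → ℝ) :
    ((List.finRange m).map fun j => rhouse Θ (u j)).prod =
        1 - Umat u m * Tmat Θ u m * (Θ * Umat u m)ᵀ * Θ ∧
      ((List.finRange m).reverse.map fun j => rhouse Θ (u j)).prod =
        1 - Umat u m * (Tmat Θ u m)ᵀ * (Θ * Umat u m)ᵀ * Θ := by
  -- the coercion `Fin m → ℕ` in the statement is elaborated as a bind on the list `finRange m`
  simp only [bind_pure_comp, List.map_eq_map, List.map_reverse, List.map_coe_finRange_eq_range]
  exact ⟨prod_rhouse_eq_compactWY Θ u m, prod_reverse_rhouse_eq_compactWY Θ u m⟩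

/-- compact representation of compositions of randomized Householder
reflectors: `P(u₁,Θ)⋯P(u_m,Θ) = I - U T (ΘU)ᵀ Θ` and
`P(u_m,Θ)⋯P(u₁,Θ) = I - U Tᵀ (ΘU)ᵀ Θ`, with `T = T_m` defined by the recursion. -/
theorem rhouse_compact {l n : ℕ} (m : ℕ) (Θ : Matrix (Fin l) (Fin n) ℝ)
    (u : ℕ → Fin n → ℝ) (hu : ∀ j < m, Θ.mulVec (u j) ≠ 0) :
    ((List.finRange m).map fun j => rhouse Θ (u j)).prod =
        1 - Umat u m * Tmat Θ u m * (Θ * Umat u m)ᵀ * Θ ∧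
      ((List.finRange m).reverse.map fun j => rhouse Θ (u j)).prod =
        1 - Umat u m * (Tmat Θ u m)ᵀ * (Θ * Umat u m)ᵀ * Θ :=
  rhouse_compact_general m Θ u
end

section
/- Let Θ ∈ ℝ^{ℓ×n} and u₁,…,u_m ∈ ℝ^n with Θu_j ≠ 0, and let T ∈ ℝ^{m×m} be the upper-triangular factor such that P(u₁,Θ)⋯P(u_m,Θ) = I_n − U T (ΘU)ᵀ Θ. Then T is invertible and satisfies (ΘU)ᵀ(ΘU) = T^{−1} + T^{−t}. -/
open Matrix

/-!
Induction on `m`. Write `w = (ΘU_j)ᵀ Θu_{j+1}` and `β = β_{j+1}`. Since `T_{j+1}` is block upper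
triangular with diagonal blocks `T_j` and `β`, and its off-diagonal block is `-β T_j w`, its inverse
is `[[T_j⁻¹, w], [0, 1/β]]`. Hence `T_{j+1}⁻¹ + T_{j+1}⁻ᵀ = [[T_j⁻¹ + T_j⁻ᵀ, w], [wᵀ, 2/β]]`, which
is the block form of the Gram matrix `(ΘU_{j+1})ᵀ(ΘU_{j+1})` because `2/β = ‖Θu_{j+1}‖²`.
-/

theorem Matrix.fromBlocks_mul_fromBlocks_eq_one_of_upper {ι K : Type*} [Fintype ι]
    [DecidableEq ι] [Field K] {A B : Matrix ι ι K} (hAB : A * B = 1) (w : ι → K) {c : K}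
    (hc : c ≠ 0) :
    fromBlocks A (of fun i (_ : Fin 1) => ((-c) • (A *ᵥ w)) i) 0 (of fun _ _ => c) *
      fromBlocks B (of fun i (_ : Fin 1) => w i) 0 (of fun _ _ => c⁻¹) =
        (1 : Matrix (ι ⊕ Fin 1) (ι ⊕ Fin 1) K) := by
  rw [fromBlocks_multiply, ← fromBlocks_one]
  congr 1
  · simpa using hAB
  · ext i k
    simp [mul_apply, mulVec, dotProduct, hc, mul_comm c]
  · simp
  · ext i k
    obtain rfl := Subsingleton.elim i k
    simp [mul_apply, hc]

section Compact

variable {l n : ℕ} (Θ : Matrix (Fin l) (Fin n) ℝ) (u : ℕ → Fin n → ℝ)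

noncomputable def sketchedGram (m : ℕ) : Matrix (Fin m) (Fin m) ℝ :=
  of fun a b => (Θ *ᵥ u a) ⬝ᵥ (Θ *ᵥ u b)

theorem transpose_mul_self_eq_sketchedGram (m : ℕ) :
    (Θ * Umat u m)ᵀ * (Θ * Umat u m) = sketchedGram Θ u m := by
  ext a b
  simp [sketchedGram, mul_apply, dotProduct, mulVec, Umat, Finset.mul_sum,
    mul_comm, mul_left_comm]

theorem sketchedGram_succ (j : ℕ) :
    sketchedGram Θ u (j + 1) =
      reindex finSumFinEquiv finSumFinEquiv
        (fromBlocks (sketchedGram Θ u j)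
          (of fun a (_ : Fin 1) => (Θ *ᵥ u a) ⬝ᵥ (Θ *ᵥ u j))
          (of fun (_ : Fin 1) b => (Θ *ᵥ u j) ⬝ᵥ (Θ *ᵥ u b))
          (of fun _ _ => (Θ *ᵥ u j) ⬝ᵥ (Θ *ᵥ u j))) := by
  apply (reindex finSumFinEquiv finSumFinEquiv).symm.injective
  rw [Equiv.symm_apply_apply]
  ext (a | a) (b | b) <;> simp [sketchedGram, Fin.val_eq_zero]

theorem Tmat_succ_mul_eq_one {j : ℕ} {B : Matrix (Fin j) (Fin j) ℝ} (hB : Tmat Θ u j * B = 1)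
    (hj : Θ *ᵥ u j ≠ 0) :
    Tmat Θ u (j + 1) *
      reindex finSumFinEquiv finSumFinEquiv
        (fromBlocks B (of fun a (_ : Fin 1) => (Θ *ᵥ u a) ⬝ᵥ (Θ *ᵥ u j)) 0
          (of fun _ _ => (2 / ((Θ *ᵥ u j) ⬝ᵥ (Θ *ᵥ u j)))⁻¹)) = 1 := by
  have hβ : 2 / ((Θ *ᵥ u j) ⬝ᵥ (Θ *ᵥ u j)) ≠ 0 := by
    simpa [dotProduct_self_eq_zero] using hj
  rw [Tmat, reindex_apply, reindex_apply, submatrix_mul_equiv,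
    fromBlocks_mul_fromBlocks_eq_one_of_upper hB _ hβ, submatrix_one_equiv]

theorem isUnit_Tmat_and_sketchedGram_eq {m : ℕ} (hu : ∀ j < m, Θ *ᵥ u j ≠ 0) :
    IsUnit (Tmat Θ u m) ∧ sketchedGram Θ u m = (Tmat Θ u m)⁻¹ + (Tmat Θ u m)⁻¹ᵀ := by
  induction m with
  | zero => exact ⟨isUnit_of_subsingleton _, Subsingleton.elim _ _⟩
  | succ j ih =>
    obtain ⟨hT, hG⟩ := ih fun a ha => hu a (ha.trans j.lt_succ_self)
    have hmul := Tmat_succ_mul_eq_one Θ u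
      (mul_nonsing_inv _ ((isUnit_iff_isUnit_det _).mp hT)) (hu j j.lt_succ_self)
    refine ⟨(isUnit_iff_isUnit_det _).mpr (isUnit_det_of_right_inverse hmul), ?_⟩
    rw [inv_eq_right_inv hmul, sketchedGram_succ, hG, transpose_reindex, fromBlocks_transpose,
      ← coe_reindexLinearEquiv ℝ ℝ, ← map_add, fromBlocks_add]
    congr 2
    all_goals ext; simp [dotProduct_comm, inv_div]

end Compact

theorem rhouse_T_woodbury_general {l n : ℕ} (m : ℕ) (Θ : Matrix (Fin l) (Fin n) ℝ)
    (u : ℕ → Fin n → ℝ) (hu : ∀ j < m, Θ.mulVec (u j) ≠ 0) :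
    IsUnit (Tmat Θ u m) ∧
      (Θ * Umat u m)ᵀ * (Θ * Umat u m) = (Tmat Θ u m)⁻¹ + ((Tmat Θ u m)⁻¹)ᵀ := by
  rw [transpose_mul_self_eq_sketchedGram]
  exact isUnit_Tmat_and_sketchedGram_eq Θ u hu

/-- the compact-form factor `T` is invertible and satisfies
`(ΘU)ᵀ(ΘU) = T⁻¹ + T⁻ᵀ`. -/
theorem rhouse_T_woodbury {l n : ℕ} (m : ℕ) (Θ : Matrix (Fin l) (Fin n) ℝ)
    (u : ℕ → Fin n → ℝ) (hu : ∀ j < m, Θ.mulVec (u j) ≠ 0)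
    (hcompact : ((List.finRange m).map fun j => rhouse Θ (u j)).prod =
      1 - Umat u m * Tmat Θ u m * (Θ * Umat u m)ᵀ * Θ) :
    IsUnit (Tmat Θ u m) ∧
      (Θ * Umat u m)ᵀ * (Θ * Umat u m) = (Tmat Θ u m)⁻¹ + ((Tmat Θ u m)⁻¹)ᵀ :=
  rhouse_T_woodbury_general m Θ u hu
end

section
/- Let Θ ∈ ℝ^{ℓ×n}, u₁,…,u_m ∈ ℝ^n with Θu_j ≠ 0, U = [u₁|⋯|u_m], and let T be the compact-form factor of P(u₁,Θ)⋯P(u_m,Θ) = I_n − U T (ΘU)ᵀΘ. Then T = (sut((ΘU)ᵀΘU) + ½ Diag((ΘU)ᵀΘU))^{−1}, where sut denotes the strictly upper-triangular part and Diag the diagonal part. -/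
open Matrix

/-- The strictly upper-triangular part of a square matrix. -/
def sut {m : ℕ} (A : Matrix (Fin m) (Fin m) ℝ) : Matrix (Fin m) (Fin m) ℝ :=
  Matrix.of fun i j => if i < j then A i j else 0

namespace RHAux

variable {l n : ℕ} (Θ : Matrix (Fin l) (Fin n) ℝ) (u : ℕ → Fin n → ℝ)

/-- Gram dot products -/
noncomputable def gdot (a b : ℕ) : ℝ := (Θ.mulVec (u a)) ⬝ᵥ (Θ.mulVec (u b))

/-- The matrix `sut(G) + ½ Diag(G)`, written entrywise. -/
noncomputable def Smat (m : ℕ) : Matrix (Fin m) (Fin m) ℝ :=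
  Matrix.of fun a b =>
    if (a : ℕ) < b then gdot Θ u a b else if (a : ℕ) = b then gdot Θ u a a / 2 else 0

lemma Smat_succ (j : ℕ) :
    Smat Θ u (j + 1) = Matrix.reindex finSumFinEquiv finSumFinEquiv
      (Matrix.fromBlocks (Smat Θ u j)
        (Matrix.of fun a (_ : Fin 1) => gdot Θ u a j)
        0
        (Matrix.of fun _ _ => gdot Θ u j j / 2)) := by
  ext a b
  rw [Matrix.reindex_apply, Matrix.submatrix_apply,
    ← finSumFinEquiv.apply_symm_apply a, ← finSumFinEquiv.apply_symm_apply b,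
    Equiv.symm_apply_apply, Equiv.symm_apply_apply]
  rcases finSumFinEquiv.symm a with a' | a' <;> rcases finSumFinEquiv.symm b with b' | b'
  · simp only [finSumFinEquiv_apply_left, Smat, Matrix.of_apply, Matrix.fromBlocks_apply₁₁,
      Fin.coe_castAdd]
  · have hb : (b' : ℕ) = 0 := Fin.val_eq_zero b'
    simp only [finSumFinEquiv_apply_left, finSumFinEquiv_apply_right, Smat, Matrix.of_apply,
      Matrix.fromBlocks_apply₁₂, Fin.coe_castAdd, Fin.coe_natAdd, hb, Nat.add_zero]
    rw [if_pos a'.is_lt]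
  · have ha : (a' : ℕ) = 0 := Fin.val_eq_zero a'
    simp only [finSumFinEquiv_apply_left, finSumFinEquiv_apply_right, Smat, Matrix.of_apply,
      Matrix.fromBlocks_apply₂₁, Fin.coe_castAdd, Fin.coe_natAdd, ha, Nat.add_zero,
      Matrix.zero_apply]
    rw [if_neg (by have := b'.is_lt; omega : ¬ j < (b' : ℕ)),
      if_neg (by have := b'.is_lt; omega : ¬ j = (b' : ℕ))]
  · have ha : (a' : ℕ) = 0 := Fin.val_eq_zero a'
    have hb : (b' : ℕ) = 0 := Fin.val_eq_zero b'
    simp only [finSumFinEquiv_apply_right, Smat, Matrix.of_apply, Matrix.fromBlocks_apply₂₂,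
      Fin.coe_natAdd, ha, hb, Nat.add_zero]
    rw [if_neg (lt_irrefl j), if_pos trivial]

lemma T_mul_S (m : ℕ) (hu : ∀ j < m, Θ.mulVec (u j) ≠ 0) :
    Tmat Θ u m * Smat Θ u m = 1 := by
  induction m with
  | zero => apply Subsingleton.elim
  | succ j ih =>
    have hj : gdot Θ u j j ≠ 0 := by
      simpa [gdot, dotProduct_self_eq_zero] using hu j (Nat.lt_succ_self j)
    have ihj : Tmat Θ u j * Smat Θ u j = 1 := ih fun k hk => hu k (hk.trans (Nat.lt_succ_self j))
    rw [Smat_succ, show Tmat Θ u (j+1) = Matrix.reindex finSumFinEquiv finSumFinEquiv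
      (Matrix.fromBlocks (Tmat Θ u j)
        (Matrix.of fun i (_ : Fin 1) =>
          ((-(2 / gdot Θ u j j)) •
              ((Tmat Θ u j).mulVec fun a : Fin j => gdot Θ u a j)) i)
        0
        (Matrix.of fun _ _ => 2 / gdot Θ u j j)) from rfl]
    rw [Matrix.reindex_apply, Matrix.reindex_apply, Matrix.submatrix_mul_equiv,
      Matrix.fromBlocks_multiply]
    conv_rhs => rw [show (1 : Matrix (Fin (j+1)) (Fin (j+1)) ℝ) =
      (1 : Matrix (Fin j ⊕ Fin 1) (Fin j ⊕ Fin 1) ℝ).submatrix finSumFinEquiv.symm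
        finSumFinEquiv.symm from (Matrix.submatrix_one_equiv finSumFinEquiv.symm).symm]
    refine congrArg (fun M : Matrix (Fin j ⊕ Fin 1) (Fin j ⊕ Fin 1) ℝ =>
      M.submatrix finSumFinEquiv.symm finSumFinEquiv.symm) ?_
    rw [← Matrix.fromBlocks_one]
    refine Matrix.ext fun i k => ?_
    rcases i with i | i <;> rcases k with k | k
    · simp [ihj]
    · simp only [Matrix.fromBlocks_apply₁₂, Matrix.add_apply, Matrix.mul_apply,
        Matrix.of_apply, Pi.smul_apply, Matrix.mulVec, dotProduct, Fin.sum_univ_one,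
        smul_eq_mul, Matrix.zero_apply]
      field_simp
      ring
    · simp
    · simp only [Matrix.fromBlocks_apply₂₂, Matrix.add_apply, Matrix.mul_apply,
        Matrix.of_apply, Fin.sum_univ_one, Matrix.zero_apply, zero_mul, zero_add,
        Finset.sum_const_zero, Matrix.one_apply, Subsingleton.elim i k, if_true]
      field_simp

lemma G_entry (m : ℕ) (a b : Fin m) :
    ((Θ * Umat u m)ᵀ * (Θ * Umat u m)) a b = gdot Θ u a b := by
  simp only [Matrix.mul_apply, Matrix.transpose_apply, Matrix.mulVec, dotProduct, Umat,
    Matrix.of_apply, gdot]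

lemma Smat_eq (m : ℕ) :
    sut ((Θ * Umat u m)ᵀ * (Θ * Umat u m)) +
        Matrix.diagonal (fun i =>
          (1 / 2) * ((Θ * Umat u m)ᵀ * (Θ * Umat u m)) i i) = Smat Θ u m := by
  ext a b
  simp only [Matrix.add_apply, sut, Matrix.of_apply, Smat, Matrix.diagonal_apply, G_entry]
  rcases lt_trichotomy a b with h | h | h
  · have h1 : (a : ℕ) < b := h
    rw [if_pos h, if_neg h.ne, if_pos h1, add_zero]
  · subst h
    rw [if_neg (lt_irrefl a), if_pos rfl, if_neg (lt_irrefl (a : ℕ)), if_pos rfl, zero_add]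
    ring
  · have h1 : ¬ ((a : ℕ) < b) := by
      have : (b : ℕ) < a := h
      omega
    have h2 : ¬ ((a : ℕ) = b) := by
      have : (b : ℕ) < a := h
      omega
    rw [if_neg (not_lt.mpr h.le), if_neg h.ne', if_neg h1, if_neg h2, add_zero]

end RHAux

/-- `T = (sut((ΘU)ᵀΘU) + ½ Diag((ΘU)ᵀΘU))⁻¹`. -/
theorem rhouse_T_formula {l n : ℕ} (m : ℕ) (Θ : Matrix (Fin l) (Fin n) ℝ)
    (u : ℕ → Fin n → ℝ) (hu : ∀ j < m, Θ.mulVec (u j) ≠ 0)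
    (hcompact : ((List.finRange m).map fun j => rhouse Θ (u j)).prod =
      1 - Umat u m * Tmat Θ u m * (Θ * Umat u m)ᵀ * Θ) :
    Tmat Θ u m =
      (sut ((Θ * Umat u m)ᵀ * (Θ * Umat u m)) +
          Matrix.diagonal (fun i =>
            (1 / 2) * ((Θ * Umat u m)ᵀ * (Θ * Umat u m)) i i))⁻¹ := by
  rw [RHAux.Smat_eq]
  exact (Matrix.inv_eq_left_inv (RHAux.T_mul_S Θ u m hu)).symm
end

section
/- Let Ψ ∈ ℝ^{(ℓ+m)×n} and suppose Ψ is an ε-embedding of Range(W) for a full-column-rank matrix W ∈ ℝ^{n×m}, i.e., (1−ε)‖x‖ ≤ ‖Ψx‖ ≤ (1+ε)‖x‖ for all x ∈ Range(W). If Q ∈ ℝ^{n×m} is a basis of Range(W) such that (ΨQ)ᵀ(ΨQ) = I_m, then Cond(Q) ≤ (1+ε)/(1−ε). -/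
open Matrix

/-- Condition number `σ_max(A)/σ_min(A)` of a matrix, expressed via the sup and inf of
`‖Ax‖` over unit vectors `x`. -/
noncomputable def condNum {ι : Type*} [Fintype ι] {m : ℕ} (A : Matrix ι (Fin m) ℝ) : ℝ :=
  sSup {r | ∃ x : Fin m → ℝ, eucNorm x = 1 ∧ r = eucNorm (A.mulVec x)} /
    sInf {r | ∃ x : Fin m → ℝ, eucNorm x = 1 ∧ r = eucNorm (A.mulVec x)}

lemma dot_self_nonneg' {k : Type*} [Fintype k] (v : k → ℝ) : 0 ≤ v ⬝ᵥ v :=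
  Finset.sum_nonneg fun i _ => mul_self_nonneg (v i)

lemma eucNorm_one_iff' {k : Type*} [Fintype k] (v : k → ℝ) (h : eucNorm v = 1) : v ⬝ᵥ v = 1 := by
  have := Real.sq_sqrt (dot_self_nonneg' v)
  unfold eucNorm at h
  nlinarith

lemma orth_norm_one {L m : ℕ} (M : Matrix (Fin L) (Fin m) ℝ) (h : Mᵀ * M = 1)
    (x : Fin m → ℝ) (hx : eucNorm x = 1) : eucNorm (M.mulVec x) = 1 := by
  have key : M.mulVec x ⬝ᵥ M.mulVec x = x ⬝ᵥ x := by
    rw [Matrix.dotProduct_mulVec, ← Matrix.mulVec_transpose, Matrix.mulVec_mulVec, h,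
      Matrix.one_mulVec, dotProduct_comm]
  unfold eucNorm
  rw [key, eucNorm_one_iff' x hx, Real.sqrt_one]

/-- if `Ψ` is an `ε`-embedding of `Range(W)` and `Q` is a basis of
`Range(W)` with `(ΨQ)ᵀ(ΨQ) = I`, then `Cond(Q) ≤ (1+ε)/(1-ε)`. -/
theorem cond_of_sketch_orthonormal {n L m : ℕ} (ε : ℝ) (hε0 : 0 < ε) (hε1 : ε < 1)
    (Ψ : Matrix (Fin L) (Fin n) ℝ) (W Q : Matrix (Fin n) (Fin m) ℝ)
    (hrank : W.rank = m)
    (hemb : ∀ c : Fin m → ℝ,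
      (1 - ε) * eucNorm (W.mulVec c) ≤ eucNorm (Ψ.mulVec (W.mulVec c)) ∧
      eucNorm (Ψ.mulVec (W.mulVec c)) ≤ (1 + ε) * eucNorm (W.mulVec c))
    (hrange₁ : ∀ c : Fin m → ℝ, ∃ d : Fin m → ℝ, Q.mulVec c = W.mulVec d)
    (hrange₂ : ∀ d : Fin m → ℝ, ∃ c : Fin m → ℝ, W.mulVec d = Q.mulVec c)
    (horth : (Ψ * Q)ᵀ * (Ψ * Q) = 1) :
    condNum Q ≤ (1 + ε) / (1 - ε) := by
  have h1ε : (0:ℝ) < 1 - ε := by linarith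
  have h1ε' : (0:ℝ) < 1 + ε := by linarith
  set S := {r | ∃ x : Fin m → ℝ, eucNorm x = 1 ∧ r = eucNorm (Q.mulVec x)} with hS
  have hbound : ∀ r ∈ S, 1 / (1 + ε) ≤ r ∧ r ≤ 1 / (1 - ε) := by
    rintro r ⟨x, hx, rfl⟩
    obtain ⟨d, hd⟩ := hrange₁ x
    have hΨQ : eucNorm (Ψ.mulVec (Q.mulVec x)) = 1 := by
      rw [Matrix.mulVec_mulVec]
      exact orth_norm_one (Ψ * Q) horth x hx
    have h := hemb d
    rw [← hd, hΨQ] at h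
    constructor
    · rw [div_le_iff₀ h1ε']
      linarith [h.2]
    · rw [le_div_iff₀ h1ε]
      linarith [h.1]
  rcases Nat.eq_zero_or_pos m with hm | hm
  · have hSe : S = ∅ := by
      ext r
      simp only [hS, Set.mem_setOf_eq, Set.mem_empty_iff_false, iff_false]
      rintro ⟨x, hx, -⟩
      subst hm
      have hz : x ⬝ᵥ x = 0 := by simp [dotProduct]
      rw [eucNorm, hz, Real.sqrt_zero] at hx
      exact one_ne_zero hx.symm
    unfold condNum
    rw [← hS, hSe, Real.sSup_empty, zero_div]
    positivity
  · have hne : S.Nonempty := by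
      refine ⟨eucNorm (Q.mulVec (Pi.single ⟨0, hm⟩ 1)), Pi.single ⟨0, hm⟩ 1, ?_, rfl⟩
      have h1 : (Pi.single (⟨0, hm⟩ : Fin m) (1:ℝ)) ⬝ᵥ (Pi.single ⟨0, hm⟩ 1) = 1 := by
        simp [dotProduct, Pi.single_apply]
      rw [eucNorm, h1, Real.sqrt_one]
    have hSup : sSup S ≤ 1 / (1 - ε) := csSup_le hne fun r hr => (hbound r hr).2
    have hInf : 1 / (1 + ε) ≤ sInf S := le_csInf hne fun r hr => (hbound r hr).1
    have hInfpos : (0:ℝ) < 1 / (1 + ε) := by positivity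
    unfold condNum
    rw [← hS]
    calc sSup S / sInf S ≤ (1 / (1 - ε)) / (1 / (1 + ε)) :=
          div_le_div₀ (by positivity) hSup hInfpos hInf
      _ = (1 + ε) / (1 - ε) := by
          field_simp
end
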